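/- arXiv:1501.02026 — 7 statements merged into one kernel-verified Lean document; each statement's English description precedes it below -/
import Mathlib

section
/- Let a ≥ 3 be an integer and define the sequence A by A_0 = 0, A_1 = 1, A_{n+2} = a·A_{n+1} − A_n + 1. Then for all i ≥ 1, A_{i+1}·A_{i−1} = A_i² − A_i. -/
/-! Substituting the recurrence for `A (n + 3)` and then for `a * A (n + 1) - A (n + 2) + 1 = A n`
shows that `A (n + 2) * A n - A (n + 1) ^ 2 + A (n + 1)` does not depend on `n`; with `A 0 = 0`,
`A 1 = 1` it vanishes at `n = 0`. -/

section

variable {R : Type*} [CommRing R] {a : R} {A : ℕ → R}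

theorem mul_sub_sq_add_succ_of_rec (hrec : ∀ n, A (n + 2) = a * A (n + 1) - A n + 1) (n : ℕ) :
    A (n + 3) * A (n + 1) - A (n + 2) ^ 2 + A (n + 2) =
      A (n + 2) * A n - A (n + 1) ^ 2 + A (n + 1) := by
  linear_combination A (n + 1) * hrec (n + 1) - A (n + 2) * hrec n

theorem mul_sub_sq_add_eq_of_rec (hrec : ∀ n, A (n + 2) = a * A (n + 1) - A n + 1) (n : ℕ) :
    A (n + 2) * A n - A (n + 1) ^ 2 + A (n + 1) = A 2 * A 0 - A 1 ^ 2 + A 1 := by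
  induction n with
  | zero => rfl
  | succ n ih => exact (mul_sub_sq_add_succ_of_rec hrec n).trans ih

end

theorem stmt0_general (a : ℤ) (A : ℕ → ℤ)
    (hA0 : A 0 = 0) (hA1 : A 1 = 1)
    (hrec : ∀ n : ℕ, A (n + 2) = a * A (n + 1) - A n + 1) :
    ∀ i : ℕ, 1 ≤ i → A (i + 1) * A (i - 1) = A i ^ 2 - A i := by
  intro i hi
  obtain ⟨k, rfl⟩ := Nat.exists_eq_add_of_le' hi
  have h := mul_sub_sq_add_eq_of_rec hrec k
  rw [hA0, hA1] at h
  simp only [Nat.add_sub_cancel]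
  linear_combination h

/-- Lemma `ratio`: for the sequence `A` with `A 0 = 0`, `A 1 = 1`,
`A (n+2) = a * A (n+1) - A n + 1` (with `a ≥ 3`), one has
`A (i+1) * A (i-1) = A i ^ 2 - A i` for all `i ≥ 1`. -/
theorem stmt0 (a : ℤ) (ha : 3 ≤ a) (A : ℕ → ℤ)
    (hA0 : A 0 = 0) (hA1 : A 1 = 1)
    (hrec : ∀ n : ℕ, A (n + 2) = a * A (n + 1) - A n + 1) :
    ∀ i : ℕ, 1 ≤ i → A (i + 1) * A (i - 1) = A i ^ 2 - A i :=
  stmt0_general a A hA0 hA1 hrec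
end

section
/- Let a ≥ 3, let A be the sequence with A_0 = 0, A_1 = 1, A_{n+2} = a·A_{n+1} − A_n + 1, and let n ≥ 2, 1 ≤ i ≤ A_{2n+1} − A_{2n}. Then (A_{2n+1} − i)/A_{2n} ≤ (A_{2n} − 1)/A_{2n−1}. -/
/-! The recurrence conserves `A (n + 2) * A n - A (n + 1) * (A (n + 1) - 1)`, which vanishes at
`n = 0`; hence `(A (m + 1) - 1) / A m = A (m + 2) / A (m + 1)`, and the left-hand side of the
inequality only subtracts `i / A (m + 1) ≥ 0` from the latter ratio. -/

section Recurrence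

variable {R : Type*} {a : R} {A : ℕ → R}

theorem mul_eq_mul_sub_one_of_recurrence [CommRing R] (hA0 : A 0 = 0) (hA1 : A 1 = 1)
    (hrec : ∀ n, A (n + 2) = a * A (n + 1) - A n + 1) (n : ℕ) :
    A (n + 2) * A n = A (n + 1) * (A (n + 1) - 1) := by
  induction n with
  | zero => simp [hA0, hA1]
  | succ k ih =>
    linear_combination A (k + 1) * hrec (k + 1) + ih - A (k + 2) * hrec k

theorem strictMono_of_recurrence [CommRing R] [LinearOrder R] [IsStrictOrderedRing R]
    (ha : 2 ≤ a) (hA0 : A 0 = 0) (hA1 : A 1 = 1)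
    (hrec : ∀ n, A (n + 2) = a * A (n + 1) - A n + 1) : StrictMono A := by
  suffices h : ∀ n, 0 ≤ A n ∧ A n < A (n + 1) from strictMono_nat_of_lt_succ fun n => (h n).2
  intro n
  induction n with
  | zero => simp [hA0, hA1]
  | succ k ih =>
    obtain ⟨hk, hlt⟩ := ih
    have hdouble : 2 * A (k + 1) ≤ a * A (k + 1) := mul_le_mul_of_nonneg_right ha (by linarith)
    exact ⟨by linarith, by linarith [hrec k]⟩

theorem sub_one_div_eq_div_of_recurrence [Field R] (hA0 : A 0 = 0) (hA1 : A 1 = 1)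
    (hrec : ∀ n, A (n + 2) = a * A (n + 1) - A n + 1) {m : ℕ} (hm : A m ≠ 0)
    (hm1 : A (m + 1) ≠ 0) : (A (m + 1) - 1) / A m = A (m + 2) / A (m + 1) := by
  rw [div_eq_div_iff hm hm1]
  linear_combination -mul_eq_mul_sub_one_of_recurrence hA0 hA1 hrec m

end Recurrence

/-- For `n ≥ 2` and `1 ≤ i ≤ A (2n+1) - A (2n)`:
`(A (2n+1) - i)/A (2n) ≤ (A (2n) - 1)/A (2n-1)` (as rationals). -/
theorem stmt4 (a : ℤ) (ha : 3 ≤ a) (A : ℕ → ℤ)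
    (hA0 : A 0 = 0) (hA1 : A 1 = 1)
    (hrec : ∀ n : ℕ, A (n + 2) = a * A (n + 1) - A n + 1) :
    ∀ (n : ℕ) (i : ℤ), 2 ≤ n → 1 ≤ i → i ≤ A (2 * n + 1) - A (2 * n) →
      ((A (2 * n + 1) : ℚ) - (i : ℚ)) / (A (2 * n) : ℚ)
        ≤ ((A (2 * n) : ℚ) - 1) / (A (2 * n - 1) : ℚ) := by
  intro n i hn hi _
  set B : ℕ → ℚ := fun k => A k
  have hB0 : B 0 = 0 := by simp [B, hA0]
  have hB1 : B 1 = 1 := by simp [B, hA1]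
  have hBrec : ∀ k, B (k + 2) = a * B (k + 1) - B k + 1 := fun k => by simp [B, hrec]
  have hmono := strictMono_of_recurrence (by exact_mod_cast ha.trans' (by norm_num)) hB0 hB1 hBrec
  have hpos : ∀ k, 0 < k → 0 < B k := fun k hk => hB0 ▸ hmono hk
  obtain ⟨m, hm, hmn⟩ : ∃ m, 0 < m ∧ 2 * n = m + 1 := ⟨2 * n - 1, by omega, by omega⟩
  change (B (2 * n + 1) - i) / B (2 * n) ≤ (B (2 * n) - 1) / B (2 * n - 1)
  rw [show 2 * n - 1 = m by omega, hmn, sub_one_div_eq_div_of_recurrence hB0 hB1 hBrec (hpos m hm).ne' (hpos _ m.succ_pos).ne']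
  have hi0 : (0 : ℚ) ≤ i := by exact_mod_cast hi.trans' zero_le_one
  exact div_le_div_of_nonneg_right (sub_le_self _ hi0) (hpos _ m.succ_pos).le
end

section
/- Let a ≥ 3 and A_0 = 0, A_1 = 1, A_{n+2} = a·A_{n+1} − A_n + 1. Then for all n ≥ 2, (A_{2n+1} − 1)/A_{2n} ≥ (A_{2n} − 2)/A_{2n−1}. -/
/-!
The recurrence gives the Cassini-type identity `A (k+2) * A k = A (k+1) ^ 2 - A (k+1)`.
Cross-multiplying, the inequality `(A (k+1) - 2) / A k ≤ (A (k+2) - 1) / A (k+1)` becomes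
`A (k+1) ^ 2 - 2 A (k+1) ≤ A (k+1) ^ 2 - A (k+1) - A k`, i.e. `A k ≤ A (k+1)`, and the sequence
is increasing as soon as `a ≥ 2`.
-/

namespace ShiftedLucasSeq

variable {a : ℤ} {A : ℕ → ℤ} (hA0 : A 0 = 0) (hA1 : A 1 = 1)
  (hrec : ∀ n : ℕ, A (n + 2) = a * A (n + 1) - A n + 1)
include hA0 hA1 hrec

theorem mul_eq_sq_sub (k : ℕ) : A (k + 2) * A k = A (k + 1) ^ 2 - A (k + 1) := by
  induction k with
  | zero => simp [hA0, hA1]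
  | succ k ih => linear_combination A (k + 1) * hrec (k + 1) + ih - A (k + 2) * hrec k

theorem strictMono (ha : 2 ≤ a) : StrictMono A := by
  have step : ∀ k, 0 ≤ A k ∧ A k < A (k + 1) := by
    intro k
    induction k with
    | zero => simp [hA0, hA1]
    | succ k ih =>
      obtain ⟨hk, hlt⟩ := ih
      refine ⟨by omega, ?_⟩
      rw [hrec k]
      nlinarith [mul_nonneg (sub_nonneg.2 ha) (hk.trans hlt.le)]
  exact strictMono_nat_of_lt_succ fun k => (step k).2

theorem pos (ha : 2 ≤ a) {k : ℕ} (hk : 1 ≤ k) : 0 < A k :=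
  hA0 ▸ strictMono hA0 hA1 hrec ha (by omega : 0 < k)

theorem div_le_div (ha : 2 ≤ a) {k : ℕ} (hk : 1 ≤ k) :
    ((A (k + 1) : ℚ) - 2) / A k ≤ ((A (k + 2) : ℚ) - 1) / A (k + 1) := by
  have hx := pos hA0 hA1 hrec ha hk
  have hy := pos hA0 hA1 hrec ha (by omega : 1 ≤ k + 1)
  have hxy := (strictMono hA0 hA1 hrec ha (Nat.lt_succ_self k)).le
  have hcas := mul_eq_sq_sub hA0 hA1 hrec k
  rw [div_le_div_iff₀ (by exact_mod_cast hx) (by exact_mod_cast hy)]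
  exact_mod_cast (by linear_combination hxy - hcas :
    (A (k + 1) - 2) * A (k + 1) ≤ (A (k + 2) - 1) * A k)

end ShiftedLucasSeq

/-- For `n ≥ 2`: `(A (2n+1) - 1)/A (2n) ≥ (A (2n) - 2)/A (2n-1)` (as rationals). -/
theorem stmt5 (a : ℤ) (ha : 3 ≤ a) (A : ℕ → ℤ)
    (hA0 : A 0 = 0) (hA1 : A 1 = 1)
    (hrec : ∀ n : ℕ, A (n + 2) = a * A (n + 1) - A n + 1) :
    ∀ n : ℕ, 2 ≤ n →
      ((A (2 * n + 1) : ℚ) - 1) / (A (2 * n) : ℚ)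
        ≥ ((A (2 * n) : ℚ) - 2) / (A (2 * n - 1) : ℚ) := by
  intro n hn
  have h := ShiftedLucasSeq.div_le_div hA0 hA1 hrec (by omega) (by omega : 1 ≤ 2 * n - 1)
  rwa [show 2 * n - 1 + 1 = 2 * n by omega, show 2 * n - 1 + 2 = 2 * n + 1 by omega] at h
end

section
/- Let a ≥ 3, let A be the sequence with A_0 = 0, A_1 = 1, A_{n+2} = a·A_{n+1} − A_n + 1, let n ≥ 2, and let j₂ be the integer with (j₂ − 1)/(A_{2n−1} + 1) < (A_{2n+1} − i)/A_{2n} ≤ j₂/(A_{2n−1} + 1) for i > (a+3)·A_{2n}/A_{2n−1}. Then j₂ ≤ A_{2n} − 4. -/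
/-!
Write `B = A (2n-1)`, `C = A (2n)`, `D = A (2n+1)`. The recurrence gives the Cassini-type identity
`D * B = C ^ 2 - C`, so the lower bound on `i` yields `B * (D - i) < C * (C - a - 4)`. Together with
the left inequality defining `j₂` this gives `(j₂ - 1) * B < (B + 1) * (C - a - 4)`, and the right-hand
side is below `(C - 4) * B` because `C ≤ a * B + 1`.
-/

theorem sub_one_lt_sub_four_of_lt_div {a B C D i j : ℚ} (ha : 0 ≤ a) (hB : 0 < B) (hC : 0 < C)
    (hDB : D * B = C ^ 2 - C) (hCB : C ≤ a * B + 1)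
    (hi : (a + 3) * C / B < i) (hj : (j - 1) / (B + 1) < (D - i) / C) :
    j - 1 < C - 4 := by
  rw [div_lt_iff₀ hB] at hi
  rw [div_lt_div_iff₀ (by positivity) hC] at hj
  have hB1 : 0 < B + 1 := by positivity
  have h : C * ((j - 1) * B) < C * ((B + 1) * (C - a - 4)) :=
    calc C * ((j - 1) * B) = (j - 1) * C * B := by ring
      _ < (D - i) * (B + 1) * B := mul_lt_mul_of_pos_right hj hB
      _ = (B + 1) * (D * B - i * B) := by ring
      _ < (B + 1) * (C ^ 2 - C - (a + 3) * C) := by rw [hDB]; gcongr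
      _ = C * ((B + 1) * (C - a - 4)) := by ring
  have h' : (j - 1) * B < (C - 4) * B := by
    linarith [lt_of_mul_lt_mul_left h hC.le]
  exact lt_of_mul_lt_mul_right h' hB.le

namespace ShiftedRecurrence

variable {a : ℤ} {A : ℕ → ℤ}

theorem mul_eq_sq_sub (hA0 : A 0 = 0) (hA1 : A 1 = 1)
    (hrec : ∀ n : ℕ, A (n + 2) = a * A (n + 1) - A n + 1) (k : ℕ) :
    A (k + 2) * A k = A (k + 1) ^ 2 - A (k + 1) := by
  induction k with
  | zero => simp [hA0, hA1]
  | succ m ih => linear_combination A (m + 1) * hrec (m + 1) + ih - A (m + 2) * hrec m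

theorem nonneg_and_lt_succ (ha : 2 ≤ a) (hA0 : A 0 = 0) (hA1 : A 1 = 1)
    (hrec : ∀ n : ℕ, A (n + 2) = a * A (n + 1) - A n + 1) (k : ℕ) :
    0 ≤ A k ∧ A k < A (k + 1) := by
  induction k with
  | zero => simp [hA0, hA1]
  | succ m ih =>
    obtain ⟨h0, h1⟩ := ih
    refine ⟨by omega, ?_⟩
    nlinarith [hrec m, mul_le_mul_of_nonneg_right ha (by omega : (0 : ℤ) ≤ A (m + 1))]

theorem le_sub_four (ha : 3 ≤ a) (hA0 : A 0 = 0) (hA1 : A 1 = 1)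
    (hrec : ∀ n : ℕ, A (n + 2) = a * A (n + 1) - A n + 1) (k : ℕ) (i : ℚ) (j : ℤ)
    (hi : ((a : ℚ) + 3) * A (k + 2) / A (k + 1) < i)
    (hj : ((j : ℚ) - 1) / ((A (k + 1) : ℚ) + 1) < ((A (k + 3) : ℚ) - i) / A (k + 2)) :
    j ≤ A (k + 2) - 4 := by
  have mono := nonneg_and_lt_succ (by omega) hA0 hA1 hrec
  have hB : 0 < A (k + 1) := by linarith [mono k, mono (k + 1)]
  have hC : 0 < A (k + 2) := by linarith [mono (k + 1)]
  have hCB : A (k + 2) ≤ a * A (k + 1) + 1 := by linarith [hrec k, mono k]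
  have hDB := mul_eq_sq_sub hA0 hA1 hrec (k + 1)
  have key := sub_one_lt_sub_four_of_lt_div (by positivity) (by exact_mod_cast hB)
    (by exact_mod_cast hC) (by exact_mod_cast hDB) (by exact_mod_cast hCB) hi hj
  have : j - 1 < A (k + 2) - 4 := by exact_mod_cast key
  omega

end ShiftedRecurrence

/-- For `n ≥ 2`, if `j₂` is the integer with
`(j₂ - 1)/(A (2n-1) + 1) < (A (2n+1) - i)/A (2n) ≤ j₂/(A (2n-1) + 1)`
and `i > (a+3) A (2n) / A (2n-1)`, then `j₂ ≤ A (2n) - 4`. -/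
theorem stmt6 (a : ℤ) (ha : 3 ≤ a) (A : ℕ → ℤ)
    (hA0 : A 0 = 0) (hA1 : A 1 = 1)
    (hrec : ∀ n : ℕ, A (n + 2) = a * A (n + 1) - A n + 1) :
    ∀ (n : ℕ) (i : ℚ) (j₂ : ℤ), 2 ≤ n →
      ((a : ℚ) + 3) * (A (2 * n) : ℚ) / (A (2 * n - 1) : ℚ) < i →
      ((j₂ : ℚ) - 1) / ((A (2 * n - 1) : ℚ) + 1)
          < ((A (2 * n + 1) : ℚ) - i) / (A (2 * n) : ℚ) →
      ((A (2 * n + 1) : ℚ) - i) / (A (2 * n) : ℚ)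
          ≤ (j₂ : ℚ) / ((A (2 * n - 1) : ℚ) + 1) →
      j₂ ≤ A (2 * n) - 4 := by
  intro n i j₂ hn hi hj _
  obtain ⟨k, rfl⟩ : ∃ k, n = k + 1 := ⟨n - 1, by omega⟩
  -- `2 * (k + 1) - 1`, `2 * (k + 1)`, `2 * (k + 1) + 1` unfold definitionally to `2 * k + 1`, `+ 2`, `+ 3`
  exact ShiftedRecurrence.le_sub_four ha hA0 hA1 hrec (2 * k) i j₂ hi hj
end

section
/- Let r, s be positive integers with r ≤ s ≤ (a/2)·r for an integer a ≥ 3, and set α = r·α₁ + s·α₂ with symmetric bilinear form (α₁|α₁) = (α₂|α₂) = 2, (α₁|α₂) = −a. Then 1 − (α|α)/2 = 1 + a·r·s − r² − s² ≥ 1 + ((a²−4)/(2a))·r·s ≥ r − 1 + r·s/2. -/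
/-!
The gap in the first inequality factors as `(a s - 2 r) (a r - 2 s) / (2 a)`, and both factors
are nonnegative on the cone `r ≤ s ≤ (a/2) r`. After clearing the denominator `2 a`, the second
inequality reads `(a² - a - 4) r s + 2 a (2 - r) ≥ 0`; since `r s ≥ r²` it follows from the
positivity of the quadratic `(a² - a - 4) r² - 2 a r + 4 a`, whose discriminant is negative
for `a ≥ 3`.
-/

section LinearOrderedField

variable {K : Type*} [Field K] [LinearOrder K] [IsStrictOrderedRing K] {a r s : K}

theorem mul_mul_sub_sq_sub_sq_sub_div_eq (ha : a ≠ 0) :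
    a * r * s - r ^ 2 - s ^ 2 - (a ^ 2 - 4) / (2 * a) * (r * s)
      = (a * s - 2 * r) * (a * r - 2 * s) / (2 * a) := by
  field_simp
  ring

theorem div_mul_le_mul_mul_sub_sq_sub_sq (ha : 0 < a) (hrs : 2 * r ≤ a * s)
    (hsr : 2 * s ≤ a * r) :
    (a ^ 2 - 4) / (2 * a) * (r * s) ≤ a * r * s - r ^ 2 - s ^ 2 := by
  rw [← sub_nonneg, mul_mul_sub_sq_sub_sq_sub_div_eq ha.ne']
  have hrs' : 0 ≤ a * s - 2 * r := sub_nonneg.2 hrs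
  have hsr' : 0 ≤ a * r - 2 * s := sub_nonneg.2 hsr
  positivity

theorem sub_one_add_mul_div_two_le (ha : 3 ≤ a) (hr : 0 ≤ r) (hrs : r ≤ s) :
    r - 1 + r * s / 2 ≤ 1 + (a ^ 2 - 4) / (2 * a) * (r * s) := by
  have ha₀ : 0 < 2 * a := by linarith
  have hc : 2 ≤ a ^ 2 - a - 4 := by nlinarith
  have hquad : 2 * a * r ≤ (a ^ 2 - a - 4) * r ^ 2 + 4 * a := by
    nlinarith [sq_nonneg ((a ^ 2 - a - 4) * r - a)]
  have hsq : r ^ 2 ≤ r * s := by nlinarith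
  rw [← sub_nonneg]
  have key : 1 + (a ^ 2 - 4) / (2 * a) * (r * s) - (r - 1 + r * s / 2)
      = ((a ^ 2 - a - 4) * (r * s) + 2 * a * (2 - r)) / (2 * a) := by
    field_simp
    ring
  rw [key]
  apply div_nonneg _ ha₀.le
  nlinarith

end LinearOrderedField

theorem stmt7_general (a r s : ℤ) (ha : 3 ≤ a) (hr : 0 < r)
    (hrs : r ≤ s) (hsa : (s : ℚ) ≤ (a : ℚ) / 2 * (r : ℚ)) :
    (1 : ℚ) - (2 * (r : ℚ) ^ 2 - 2 * (a : ℚ) * r * s + 2 * (s : ℚ) ^ 2) / 2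
        = 1 + (a : ℚ) * r * s - (r : ℚ) ^ 2 - (s : ℚ) ^ 2 ∧
    1 + (a : ℚ) * r * s - (r : ℚ) ^ 2 - (s : ℚ) ^ 2
        ≥ 1 + (((a : ℚ) ^ 2 - 4) / (2 * (a : ℚ))) * ((r : ℚ) * (s : ℚ)) ∧
    1 + (((a : ℚ) ^ 2 - 4) / (2 * (a : ℚ))) * ((r : ℚ) * (s : ℚ))
        ≥ (r : ℚ) - 1 + (r : ℚ) * (s : ℚ) / 2 := by
  have ha' : (3 : ℚ) ≤ a := by exact_mod_cast ha
  have hr' : (0 : ℚ) ≤ r := by exact_mod_cast hr.le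
  have hrs' : (r : ℚ) ≤ s := by exact_mod_cast hrs
  refine ⟨by ring, ?_, sub_one_add_mul_div_two_le ha' hr' hrs'⟩
  have h2r : 2 * (r : ℚ) ≤ a * s := by nlinarith
  have h2s : 2 * (s : ℚ) ≤ a * r := by linarith
  linarith [div_mul_le_mul_mul_sub_sq_sub_sq (by linarith) h2r h2s]

/-- For positive integers `r ≤ s ≤ (a/2) r` with `a ≥ 3`, and
`(α|α) = 2r² - 2ars + 2s²`, the chain
`1 - (α|α)/2 = 1 + ars - r² - s² ≥ 1 + ((a²-4)/(2a)) rs ≥ r - 1 + rs/2` holds. -/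
theorem stmt7 (a r s : ℤ) (ha : 3 ≤ a) (hr : 0 < r) (hs : 0 < s)
    (hrs : r ≤ s) (hsa : (s : ℚ) ≤ (a : ℚ) / 2 * (r : ℚ)) :
    (1 : ℚ) - (2 * (r : ℚ) ^ 2 - 2 * (a : ℚ) * r * s + 2 * (s : ℚ) ^ 2) / 2
        = 1 + (a : ℚ) * r * s - (r : ℚ) ^ 2 - (s : ℚ) ^ 2 ∧
    1 + (a : ℚ) * r * s - (r : ℚ) ^ 2 - (s : ℚ) ^ 2
        ≥ 1 + (((a : ℚ) ^ 2 - 4) / (2 * (a : ℚ))) * ((r : ℚ) * (s : ℚ)) ∧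
    1 + (((a : ℚ) ^ 2 - 4) / (2 * (a : ℚ))) * ((r : ℚ) * (s : ℚ))
        ≥ (r : ℚ) - 1 + (r : ℚ) * (s : ℚ) / 2 :=
  stmt7_general a r s ha hr hrs hsa
end

section
/- For positive integers r ≤ s, the map sending a Dyck path D of size r × s (a lattice path from (0,0) to (r,s) staying weakly below the diagonal) to the tuple (γ₀, γ₁, …, γ_{s−1}), where γ_k for 1 ≤ k ≤ s−1 is the number of unit boxes in the k-th row lying below D, and γ₀ = n − Σ_{k=1}^{s−1} γ_k with n = r − 1 + (total number of unit boxes below the diagonal), yields a weakly decreasing sequence γ₀ ≥ γ₁ ≥ … ≥ γ_{s−1}; hence the number of Dyck paths of size r × s is at most p_s(n), the number of partitions of n into at most s parts. -/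
open List

def east (w : List Bool) : ℕ := w.count false
def north (w : List Bool) : ℕ := w.count true

/-- A Dyck path of size `r × s`: a lattice path from `(0,0)` to `(r,s)` (east = `false`,
north = `true`) that never goes above the diagonal. -/
def IsDyckSize (r s : ℕ) (w : List Bool) : Prop :=
  east w = r ∧ north w = s ∧ ∀ p : List Bool, p <+: w → r * north p ≤ s * east p

/-- `rowBoxes w k` is the number of unit boxes in row `k` (i.e. with `y ∈ [k-1, k]`)
lying below the path `w`: the number of east steps preceded by at least `k` north steps. -/
def rowBoxes : List Bool → ℕ → ℕ
  | [], _ => 0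
  | false :: w, k => (if k = 0 then 1 else 0) + rowBoxes w k
  | true :: w, k => rowBoxes w (k - 1)

/-- The number of unit boxes (entirely) below the diagonal of the `r × s` rectangle. -/
def diagBoxes (r s : ℕ) : ℕ :=
  (((Finset.range r) ×ˢ (Finset.range s)).filter (fun x => r * (x.2 + 1) ≤ s * x.1)).card

/-- number of norths before the x-th east step -/
def hgt : List Bool → ℕ → ℕ
  | [], _ => 0
  | false :: _, 0 => 0
  | false :: w, x+1 => hgt w x
  | true :: w, x => hgt w x + 1

lemma east_cons_false (w : List Bool) : east (false :: w) = east w + 1 := by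
  simp [east]
lemma east_cons_true (w : List Bool) : east (true :: w) = east w := by
  simp [east]
lemma north_cons_false (w : List Bool) : north (false :: w) = north w := by
  simp [north]
lemma north_cons_true (w : List Bool) : north (true :: w) = north w + 1 := by
  simp [north]

lemma east_add_north (w : List Bool) : east w + north w = w.length := by
  induction w with
  | nil => rfl
  | cons b t ih =>
    cases b
    · rw [east_cons_false, north_cons_false, List.length_cons]; omega
    · rw [east_cons_true, north_cons_true, List.length_cons]; omega

lemma rowBoxes_zero (w : List Bool) : rowBoxes w 0 = east w := by
  induction w with
  | nil => rfl
  | cons b t ih =>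
    cases b <;> simp [rowBoxes, east_cons_false, east_cons_true, ih] <;> omega

lemma rowBoxes_le_east (w : List Bool) (k : ℕ) : rowBoxes w k ≤ east w := by
  induction w generalizing k with
  | nil => simp [rowBoxes]
  | cons b t ih =>
    cases b
    · simp only [rowBoxes, east_cons_false]
      have := ih k; split <;> omega
    · simp only [rowBoxes, east_cons_true]; exact ih _

lemma rowBoxes_mono (w : List Bool) : ∀ {j k : ℕ}, j ≤ k → rowBoxes w k ≤ rowBoxes w j := by
  induction w with
  | nil => intros; simp [rowBoxes]
  | cons b t ih =>
    intro j k hjk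
    cases b
    · simp only [rowBoxes]
      have := ih hjk
      have : rowBoxes t k ≤ rowBoxes t j := ih hjk
      split <;> split <;> omega
    · simp only [rowBoxes]
      exact ih (by omega)

lemma rowBoxes_eq_sum (w : List Bool) (k : ℕ) :
    rowBoxes w k = ∑ x ∈ Finset.range (east w), (if k ≤ hgt w x then 1 else 0) := by
  induction w generalizing k with
  | nil => simp [rowBoxes, east]
  | cons b t ih =>
    cases b
    · rw [east_cons_false, Finset.sum_range_succ']
      simp only [rowBoxes, hgt]
      rw [ih k, add_comm]
      congr 1
      have : (if k ≤ 0 then 1 else 0) = (if k = 0 then 1 else 0) := by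
        split <;> split <;> omega
      exact this.symm
    · rw [east_cons_true]
      simp only [rowBoxes, hgt]
      rw [ih (k-1)]
      refine Finset.sum_congr rfl fun x _ => ?_
      have : k - 1 ≤ hgt t x ↔ k ≤ hgt t x + 1 := by omega
      simp [this]
      rfl

lemma dyck_hgt_aux (r s : ℕ) :
    ∀ (w : List Bool) (a b : ℕ),
      (∀ p, p <+: w → r * (b + north p) ≤ s * (a + east p)) →
      ∀ x, x < east w → r * (b + hgt w x) ≤ s * (a + x) := by
  intro w
  induction w with
  | nil => intro a b _ x hx; simp [east] at hx
  | cons c t ih =>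
    intro a b hp x hx
    cases c
    · cases x with
      | zero =>
        have h0 := hp [] (nil_prefix)
        simpa [north, east, hgt] using h0
      | succ x =>
        have := ih (a+1) b (fun p hpre => by
          have h := hp (false :: p) (by rw [List.cons_prefix_cons]; exact ⟨rfl, hpre⟩)
          rw [north_cons_false, east_cons_false] at h
          calc r * (b + north p) ≤ s * (a + (east p + 1)) := h
          _ = s * (a + 1 + east p) := by ring) x (by
            rw [east_cons_false] at hx; omega)
        have heq : a + 1 + x = a + (x+1) := by omega
        rw [heq] at this
        simpa [hgt] using this
    · have := ih a (b+1) (fun p hpre => by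
        have h := hp (true :: p) (by rw [List.cons_prefix_cons]; exact ⟨rfl, hpre⟩)
        rw [north_cons_true, east_cons_true] at h
        calc r * (b + 1 + north p) = r * (b + (north p + 1)) := by ring
        _ ≤ s * (a + east p) := h) x (by rwa [east_cons_true] at hx)
      simp only [hgt]
      calc r * (b + (hgt t x + 1)) = r * (b + 1 + hgt t x) := by ring
      _ ≤ s * (a + x) := this

lemma dyck_hgt (r s : ℕ) (w : List Bool)
    (h : ∀ p : List Bool, p <+: w → r * north p ≤ s * east p)
    (x : ℕ) (hx : x < east w) : r * hgt w x ≤ s * x := by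
  have := dyck_hgt_aux r s w 0 0 (fun p hp => by simpa using h p hp) x hx
  simpa using this

lemma hgt_le (r s : ℕ) (hr : 0 < r) (hsp : 0 < s) (w : List Bool)
    (h : ∀ p : List Bool, p <+: w → r * north p ≤ s * east p)
    (x : ℕ) (hx : x < east w) (he : east w = r) : hgt w x ≤ s - 1 := by
  have hd := dyck_hgt r s w h x hx
  by_contra hc
  push_neg at hc
  have hs : s ≤ hgt w x := by omega
  have h1 : r * s ≤ r * hgt w x := Nat.mul_le_mul_left r hs
  have h3 : s * (x+1) ≤ s * r := Nat.mul_le_mul_left s (by omega)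
  have h4 : s * (x+1) = s * x + s := Nat.mul_succ s x
  have h5 : s * r = r * s := Nat.mul_comm s r
  omega

-- sum over Icc 1 (s-1)
lemma sum_rowBoxes_le (r s : ℕ) (hs : 1 ≤ s) (w : List Bool)
    (hw : IsDyckSize r s w) :
    (∑ m ∈ Finset.Icc 1 (s - 1), rowBoxes w m) ≤ diagBoxes r s := by
  obtain ⟨he, hn, hd⟩ := hw
  have key : ∀ m x, x < r → m ≤ hgt w x → r * m ≤ s * x := by
    intro m x hx hm
    calc r * m ≤ r * hgt w x := Nat.mul_le_mul_left r hm
    _ ≤ s * x := dyck_hgt r s w hd x (by omega)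
  calc (∑ m ∈ Finset.Icc 1 (s - 1), rowBoxes w m)
      = ∑ m ∈ Finset.Icc 1 (s-1), ∑ x ∈ Finset.range r, (if m ≤ hgt w x then 1 else 0) := by
        refine Finset.sum_congr rfl fun m _ => ?_
        rw [rowBoxes_eq_sum, he]
    _ = ∑ x ∈ Finset.range r, ∑ m ∈ Finset.Icc 1 (s-1), (if m ≤ hgt w x then 1 else 0) :=
        Finset.sum_comm
    _ ≤ ∑ x ∈ Finset.range r, ∑ y ∈ Finset.range s, (if r * (y+1) ≤ s * x then 1 else 0) := by
        refine Finset.sum_le_sum fun x hx => ?_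
        rw [Finset.mem_range] at hx
        have : Finset.Icc 1 (s-1) = Finset.Ico 1 s := by
          rw [← Finset.Ico_add_one_right_eq_Icc]; congr 1; omega
        rw [this, Finset.sum_Ico_eq_sum_range]
        calc ∑ m ∈ Finset.range (s-1), (if 1 + m ≤ hgt w x then 1 else 0)
            ≤ ∑ m ∈ Finset.range (s-1), (if r * (m+1) ≤ s * x then 1 else 0) := by
              refine Finset.sum_le_sum fun m _ => ?_
              split
              · rw [if_pos]
                exact key (m+1) x hx (by omega)
              · omega
          _ ≤ ∑ y ∈ Finset.range s, (if r * (y+1) ≤ s * x then 1 else 0) := by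
              refine Finset.sum_le_sum_of_subset (Finset.range_subset_range.2 (by omega))
    _ = diagBoxes r s := by
        rw [diagBoxes, Finset.card_filter, Finset.sum_product]

lemma eq_of_rowBoxes : ∀ (w1 w2 : List Bool), north w1 = north w2 →
    (∀ k, rowBoxes w1 k = rowBoxes w2 k) → w1 = w2 := by
  intro w1
  induction w1 with
  | nil =>
    intro w2 hn hk
    have h0 : east w2 = 0 := by rw [← rowBoxes_zero, ← hk 0]; rfl
    have h1 := east_add_north w2
    have h2 : north w2 = 0 := by rw [← hn]; rfl
    have : w2.length = 0 := by omega
    exact (List.length_eq_zero_iff.mp this).symm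
  | cons b t ih =>
    intro w2 hn hk
    cases w2 with
    | nil =>
      exfalso
      have h0 : east (b :: t) = 0 := by rw [← rowBoxes_zero, hk 0]; rfl
      have h2 : north (b :: t) = 0 := by rw [hn]; rfl
      have h1 := east_add_north (b :: t)
      simp at h1; omega
    | cons c u =>
      cases b <;> cases c
      · -- false, false
        have ht : ∀ k, rowBoxes t k = rowBoxes u k := by
          intro k
          cases k with
          | zero => have := hk 0; simp [rowBoxes] at this; omega
          | succ k => have := hk (k+1); simpa [rowBoxes] using this
        have hnn : north t = north u := by
          rw [north_cons_false, north_cons_false] at hn; exact hn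
        rw [ih u hnn ht]
      · -- false, true : contradiction
        exfalso
        have h0 := hk 0
        have h1 := hk 1
        simp only [rowBoxes, if_pos, if_neg one_ne_zero] at h0 h1
        norm_num at h0 h1
        have hm := rowBoxes_mono t (Nat.zero_le 1)
        omega
      · -- true, false : contradiction
        exfalso
        have h0 := hk 0
        have h1 := hk 1
        simp only [rowBoxes, if_pos, if_neg one_ne_zero] at h0 h1
        norm_num at h0 h1
        have hm := rowBoxes_mono u (Nat.zero_le 1)
        omega
      · -- true, true
        have ht : ∀ k, rowBoxes t k = rowBoxes u k := fun k => by
          have := hk (k+1); simpa [rowBoxes] using this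
        have hnn : north t = north u := by
          rw [north_cons_true, north_cons_true] at hn; omega
        rw [ih u hnn ht]

lemma dyck_first (r s : ℕ) (hr : 0 < r) (w : List Bool) (hw : IsDyckSize r s w) :
    ∃ t, w = false :: t := by
  obtain ⟨he, hn, hd⟩ := hw
  cases w with
  | nil => exfalso; simp [east] at he; omega
  | cons b t =>
    cases b
    · exact ⟨t, rfl⟩
    · exfalso
      have := hd [true] ⟨t, rfl⟩
      simp [east, north] at this
      omega

lemma rowBoxes_one_le (r s : ℕ) (hr : 0 < r) (w : List Bool) (hw : IsDyckSize r s w) :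
    rowBoxes w 1 ≤ r - 1 := by
  obtain ⟨t, rfl⟩ := dyck_first r s hr w hw
  have he : east t + 1 = r := by rw [← east_cons_false]; exact hw.1
  simp only [rowBoxes, if_neg one_ne_zero]
  have := rowBoxes_le_east t 1
  omega

lemma rowBoxes_of_ge (r s : ℕ) (hr : 0 < r) (hsp : 0 < s) (w : List Bool)
    (hw : IsDyckSize r s w) (k : ℕ) (hk : s ≤ k) : rowBoxes w k = 0 := by
  have h0 : rowBoxes w s = 0 := by
    rw [rowBoxes_eq_sum]
    refine Finset.sum_eq_zero fun x hx => ?_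
    rw [Finset.mem_range] at hx
    have := hgt_le r s hr hsp w hw.2.2 x hx hw.1
    rw [if_neg]; omega
  have := rowBoxes_mono w hk
  omega

def gam (r s : ℕ) (w : List Bool) (j : ℕ) : ℕ :=
  if j = 0 then (r - 1 + diagBoxes r s) - (∑ m ∈ Finset.Icc 1 (s - 1), rowBoxes w m)
  else rowBoxes w j

lemma gam_step (r s : ℕ) (hr : 0 < r) (hrs : r ≤ s) (w : List Bool)
    (hw : IsDyckSize r s w) (k : ℕ) (hk : k < s - 1) :
    gam r s w (k+1) ≤ gam r s w k := by
  cases k with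
  | zero =>
    have hsum := sum_rowBoxes_le r s (by omega) w hw
    have h1 := rowBoxes_one_le r s hr w hw
    have hg1 : gam r s w (0+1) = rowBoxes w 1 := by simp [gam]
    have hg0 : gam r s w 0
        = r - 1 + diagBoxes r s - (∑ m ∈ Finset.Icc 1 (s - 1), rowBoxes w m) := by
      simp [gam]
    omega
  | succ k =>
    simp only [gam, if_neg (Nat.succ_ne_zero _)]
    exact rowBoxes_mono w (by omega)

lemma gam_mono (r s : ℕ) (hr : 0 < r) (hrs : r ≤ s) (w : List Bool)
    (hw : IsDyckSize r s w) : ∀ k, k < s → ∀ j, j ≤ k → gam r s w k ≤ gam r s w j := by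
  intro k
  induction k with
  | zero =>
    intro _ j hj
    have : j = 0 := by omega
    subst this; exact le_refl _
  | succ k ih =>
    intro hk j hj
    rcases Nat.eq_or_lt_of_le hj with h | h
    · subst h; exact le_refl _
    · calc gam r s w (k+1) ≤ gam r s w k := gam_step r s hr hrs w hw k (by omega)
      _ ≤ gam r s w j := ih (by omega) j (by omega)

lemma sum_gam (r s : ℕ) (hr : 0 < r) (hrs : r ≤ s) (w : List Bool)
    (hw : IsDyckSize r s w) :
    ∑ k ∈ Finset.range s, gam r s w k = r - 1 + diagBoxes r s := by
  have hins : Finset.range s = insert 0 (Finset.Icc 1 (s-1)) := by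
    ext x
    simp only [Finset.mem_range, Finset.mem_insert, Finset.mem_Icc]
    omega
  rw [hins, Finset.sum_insert (by simp)]
  have h2 : ∑ k ∈ Finset.Icc 1 (s-1), gam r s w k
      = ∑ k ∈ Finset.Icc 1 (s-1), rowBoxes w k := by
    refine Finset.sum_congr rfl fun k hk => ?_
    rw [Finset.mem_Icc] at hk
    simp only [gam, if_neg (show ¬ k = 0 by omega)]
  rw [h2]
  have hsum := sum_rowBoxes_le r s (by omega) w hw
  have hg0 : gam r s w 0
      = r - 1 + diagBoxes r s - (∑ m ∈ Finset.Icc 1 (s - 1), rowBoxes w m) := by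
    simp [gam]
  omega

def dparts (r s : ℕ) (w : List Bool) : Multiset ℕ :=
  (Multiset.map (gam r s w) (Finset.range s).val).filter (0 < ·)

lemma dparts_sum (r s : ℕ) (hr : 0 < r) (hrs : r ≤ s) (w : List Bool)
    (hw : IsDyckSize r s w) : (dparts r s w).sum = r - 1 + diagBoxes r s := by
  have h1 := Multiset.sum_filter_add_sum_filter_not
    (s := Multiset.map (gam r s w) (Finset.range s).val) (fun a => 0 < a)
  have h2 : (Multiset.filter (fun a => ¬ 0 < a)
      (Multiset.map (gam r s w) (Finset.range s).val)).sum = 0 := by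
    refine Multiset.sum_eq_zero fun x hx => ?_
    rw [Multiset.mem_filter] at hx
    omega
  have h3 : (Multiset.map (gam r s w) (Finset.range s).val).sum
      = r - 1 + diagBoxes r s := by
    rw [← Finset.sum_eq_multiset_sum]
    exact sum_gam r s hr hrs w hw
  rw [dparts]
  omega

lemma dparts_card (r s : ℕ) (w : List Bool) : (dparts r s w).card ≤ s := by
  calc (dparts r s w).card
      ≤ (Multiset.map (gam r s w) (Finset.range s).val).card :=
        Multiset.card_le_card (Multiset.filter_le _ _)
    _ = s := by simp

lemma countP_dparts (r s : ℕ) (w : List Bool) (t : ℕ) :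
    Multiset.countP (fun a => t < a) (dparts r s w)
      = ((Finset.range s).filter (fun k => t < gam r s w k)).card := by
  rw [dparts, Multiset.countP_filter]
  have : Multiset.countP (fun a => t < a ∧ 0 < a)
      (Multiset.map (gam r s w) (Finset.range s).val)
      = Multiset.countP (fun a => t < a)
      (Multiset.map (gam r s w) (Finset.range s).val) := by
    refine Multiset.countP_congr rfl fun x _ => ?_
    simp only [eq_iff_iff]
    omega
  rw [this, Multiset.countP_map]
  rfl

lemma gam_lt_iff (r s : ℕ) (hr : 0 < r) (hrs : r ≤ s) (w : List Bool)
    (hw : IsDyckSize r s w) (k : ℕ) (hk : k < s) (t : ℕ) :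
    t < gam r s w k ↔ k < ((Finset.range s).filter (fun j => t < gam r s w j)).card := by
  constructor
  · intro ht
    have hsub : Finset.range (k+1) ⊆ (Finset.range s).filter (fun j => t < gam r s w j) := by
      intro j hj
      rw [Finset.mem_range] at hj
      rw [Finset.mem_filter, Finset.mem_range]
      refine ⟨by omega, lt_of_lt_of_le ht ?_⟩
      exact gam_mono r s hr hrs w hw k hk j (by omega)
    have := Finset.card_le_card hsub
    rwa [Finset.card_range] at this
  · intro hc
    by_contra ht
    push_neg at ht
    have hsub : (Finset.range s).filter (fun j => t < gam r s w j) ⊆ Finset.range k := by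
      intro j hj
      rw [Finset.mem_filter, Finset.mem_range] at hj
      rw [Finset.mem_range]
      by_contra hjk
      push_neg at hjk
      have := gam_mono r s hr hrs w hw j hj.1 k hjk
      omega
    have := Finset.card_le_card hsub
    rw [Finset.card_range] at this
    omega

lemma gam_inj (r s : ℕ) (hr : 0 < r) (hrs : r ≤ s) (w1 w2 : List Bool)
    (h1 : IsDyckSize r s w1) (h2 : IsDyckSize r s w2)
    (hp : dparts r s w1 = dparts r s w2) : w1 = w2 := by
  have hc : ∀ t, ((Finset.range s).filter (fun k => t < gam r s w1 k)).card
      = ((Finset.range s).filter (fun k => t < gam r s w2 k)).card := by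
    intro t
    rw [← countP_dparts, ← countP_dparts, hp]
  have hg : ∀ k, k < s → gam r s w1 k = gam r s w2 k := by
    intro k hk
    refine le_antisymm ?_ ?_
    · by_contra hlt
      push_neg at hlt
      have := (gam_lt_iff r s hr hrs w2 h2 k hk (gam r s w2 k)).mpr
        (by rw [← hc]; exact (gam_lt_iff r s hr hrs w1 h1 k hk _).mp hlt)
      omega
    · by_contra hlt
      push_neg at hlt
      have := (gam_lt_iff r s hr hrs w1 h1 k hk (gam r s w1 k)).mpr
        (by rw [hc]; exact (gam_lt_iff r s hr hrs w2 h2 k hk _).mp hlt)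
      omega
  have hrow : ∀ k, rowBoxes w1 k = rowBoxes w2 k := by
    intro k
    rcases Nat.lt_or_ge k s with hks | hks
    · rcases Nat.eq_zero_or_pos k with hk0 | hk0
      · subst hk0
        rw [rowBoxes_zero, rowBoxes_zero, h1.1, h2.1]
      · have := hg k hks
        simpa [gam, show ¬ k = 0 by omega] using this
    · rw [rowBoxes_of_ge r s hr (by omega) w1 h1 k hks,
        rowBoxes_of_ge r s hr (by omega) w2 h2 k hks]
  exact eq_of_rowBoxes w1 w2 (by rw [h1.2.1, h2.2.1]) hrow


/-- For `r ≤ s` and `n = r - 1 + (number of boxes below the diagonal)`, the tuple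
`(γ₀, …, γ_{s-1})` attached to a Dyck path of size `r × s` — with `γ_k` the number of
boxes in row `k` below the path for `1 ≤ k ≤ s-1` and `γ₀ = n - Σ γ_k` — is weakly
decreasing; hence the number of Dyck paths of size `r × s` is at most `p_s(n)`,
the number of partitions of `n` into at most `s` parts. -/
theorem stmt8 (r s : ℕ) (hr : 0 < r) (hrs : r ≤ s) :
    (∀ w : List Bool, IsDyckSize r s w →
      ∀ k : ℕ, k < s - 1 →
        (fun j => if j = 0 then
            (r - 1 + diagBoxes r s) - (∑ m ∈ Finset.Icc 1 (s - 1), rowBoxes w m)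
          else rowBoxes w j) (k + 1)
        ≤ (fun j => if j = 0 then
            (r - 1 + diagBoxes r s) - (∑ m ∈ Finset.Icc 1 (s - 1), rowBoxes w m)
          else rowBoxes w j) k) ∧
    Set.ncard {w : List Bool | IsDyckSize r s w}
      ≤ Fintype.card {p : Nat.Partition (r - 1 + diagBoxes r s) // p.parts.card ≤ s} := by
  constructor
  · intro w hw k hk
    exact gam_step r s hr hrs w hw k hk
  · rw [← Nat.card_coe_set_eq, ← Nat.card_eq_fintype_card]
    refine Nat.card_le_card_of_injective
      (f := fun (w : {w : List Bool | IsDyckSize r s w}) =>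
        (⟨⟨dparts r s w.1,
            fun {i} hi => by
              rw [dparts, Multiset.mem_filter] at hi
              exact hi.2,
            dparts_sum r s hr hrs w.1 w.2⟩,
          dparts_card r s w.1⟩ :
          {p : Nat.Partition (r - 1 + diagBoxes r s) // p.parts.card ≤ s})) ?_
    intro ⟨w1, hw1⟩ ⟨w2, hw2⟩ h
    simp only [Subtype.mk.injEq, Nat.Partition.mk.injEq] at h
    exact Subtype.ext (gam_inj r s hr hrs w1 w2 hw1 hw2 h)
end

section
/- Define the contribution multiplicity c(D) of a Dyck path D to be Σ_{s ∈ S(D)} sgn(s), where S(D) is the set of concatenations of elementary paths L_{A_{i+1}×A_i} and L_{A_i×A_{i+1}} realizing D, and sgn(s) = (−1)^{Σ_{i odd}(c_i⁰(s)+c_i¹(s))}. If D = π(D₁D₂) is a concatenation of Dyck paths D₁, D₂ at a 21-corner, then c(D) = c(D₁)·c(D₂). -/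
open List

/-- The sequence `A 0 = 0`, `A 1 = 1`, `A (n+2) = a * A (n+1) - A n + 1` (for `a ≥ 3`
this agrees with the integer recurrence; subtraction does not truncate). -/
def AN (a : ℕ) : ℕ → ℕ
  | 0 => 0
  | 1 => 1
  | n + 2 => a * AN a (n + 1) + 1 - AN a n

/-- Elementary path `L_{u×v}`: `u` east steps (`false`) followed by `v` north steps (`true`). -/
def L (u v : ℕ) : List Bool := List.replicate u false ++ List.replicate v true

/-- A word is a Dyck path (of its own size): it never goes above the diagonal. -/
def IsDyckWord (w : List Bool) : Prop :=
  ∀ p : List Bool, p <+: w → east w * north p ≤ north w * east p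

def powWord (w : List Bool) (d : ℕ) : List Bool := (List.replicate d w).flatten

/-- An essential (primitive) path: not a `d`-fold concatenation of a shorter path, `d ≥ 2`. -/
def Essential (w : List Bool) : Prop :=
  w ≠ [] ∧ ∀ (w₀ : List Bool) (d : ℕ), 2 ≤ d → w ≠ powWord w₀ d

/-- The cyclic-equivalence class (orbit under rotation) of a word. -/
def Orbit (w : List Bool) : Set (List Bool) := {w' | ∃ n : ℕ, w' = w.rotate n}

/-- `L_{u×v}` is of type `(-1)`: `A n ≤ min(u,v)`, `max(u,v) < A (n+1)` with `n` even, `n > 0`. -/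
def TypeNeg (a u v : ℕ) : Prop :=
  ∃ n : ℕ, 1 ≤ n ∧ AN a (2 * n) ≤ min u v ∧ max u v < AN a (2 * n + 1)

/-- `L_{u×v}` is of type `(0)`: `A n ≤ min(u,v) < A (n+1) ≤ max(u,v)` with `n > 0`. -/
def TypeZero (a u v : ℕ) : Prop :=
  ∃ n : ℕ, 1 ≤ n ∧ AN a n ≤ min u v ∧ min u v < AN a (n + 1) ∧ AN a (n + 1) ≤ max u v

/-- `sub` occurs in `D` as a framed subpath (endpoints are 21-corners of `D`). -/
def FramedOcc (D sub : List Bool) : Prop :=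
  ∃ pre post : List Bool, D = pre ++ sub ++ post ∧
    (pre = [] ∨ ∃ p, pre = p ++ [true]) ∧ (post = [] ∨ ∃ q, post = false :: q)

def HasFramedZero (a : ℕ) (D : List Bool) : Prop :=
  ∃ u v : ℕ, TypeZero a u v ∧ FramedOcc D (L u v)

def HasFramedNeg (a : ℕ) (D : List Bool) : Prop :=
  ∃ u v : ℕ, TypeNeg a u v ∧ FramedOcc D (L u v)

/-- The number of framed subpaths of type `(-1)` of `D` (occurrences indexed by the
prefix before them together with the size `(u,v)`). -/
noncomputable def negCount (a : ℕ) (D : List Bool) : ℕ :=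
  Set.ncard {x : List Bool × ℕ × ℕ | TypeNeg a x.2.1 x.2.2 ∧
    ∃ post : List Bool, D = x.1 ++ L x.2.1 x.2.2 ++ post ∧
      (x.1 = [] ∨ ∃ p, x.1 = p ++ [true]) ∧ (post = [] ∨ ∃ q, post = false :: q)}

/-- The elementary blocks used in concatenations: `(i, false)` is `L_{A(i+1)×A i}`,
`(i, true)` is `L_{A i×A(i+1)}`. -/
def block (a : ℕ) : ℕ × Bool → List Bool
  | (i, false) => L (AN a (i + 1)) (AN a i)
  | (i, true) => L (AN a i) (AN a (i + 1))

/-- The sign of a concatenation: `(-1)^(number of blocks with odd index)`. -/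
def sgnC (s : List (ℕ × Bool)) : ℤ := (-1) ^ (s.filter (fun x => x.1 % 2 == 1)).length

/-- The set `S(D)` of concatenations of elementary blocks realizing `D`. -/
def SDyck (a : ℕ) (D : List Bool) : Set (List (ℕ × Bool)) :=
  {s | (s.map (block a)).flatten = D}

/-- The contribution multiplicity `c(D) = Σ_{s ∈ S(D)} sgn(s)`. -/
noncomputable def cMult (a : ℕ) (D : List Bool) : ℤ := ∑ᶠ s ∈ SDyck a D, sgnC s

-- The contribution multiplicity of an equivalence class, computed on a Dyck-word
-- representative (it is independent of the choice).
open Classical in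
noncomputable def cClass (a : ℕ) (C : Set (List Bool)) : ℤ :=
  if h : ∃ w, w ∈ C ∧ IsDyckWord w then cMult a h.choose else 0

/-!
Every elementary block `L_{u×v}` is a run of east steps followed by a run of north steps, so no
block contains a north step immediately followed by an east step. Hence the 21-corner between
`D₁` and `D₂` is a block boundary of every realization of `D₁ D₂`, and concatenation is a
bijection `S(D₁) × S(D₂) → S(D₁ D₂)`; the sign is multiplicative along it. Since `A` is strictly
increasing for `a ≥ 2`, blocks are nonempty and `S(D)` is finite, so the sums are genuine finite
sums and factor.
-/

lemma List.exists_flatten_eq_of_flatten_eq_append {α : Type*} {L : List (List α)}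
    {X Y : List α} {t f : α} (hX : X.getLast? = some t) (hY : Y.head? = some f)
    (hL : ∀ w ∈ L, ¬ [t, f] <:+: w) (h : L.flatten = X ++ Y) :
    ∃ L₁ L₂, L = L₁ ++ L₂ ∧ L₁.flatten = X ∧ L₂.flatten = Y := by
  rcases List.flatten_eq_append_iff.mp h with h | ⟨as, bs, c, cs, ds, rfl, rfl, rfl⟩
  · obtain ⟨L₁, L₂, rfl, rfl, rfl⟩ := h
    exact ⟨L₁, L₂, rfl, rfl, rfl⟩
  rcases bs.eq_nil_or_concat' with rfl | ⟨bs', b, rfl⟩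
  · exact ⟨as, (c :: cs) :: ds, rfl, by simp, by simp⟩
  · simp only [List.getLast?_append, List.getLast?_singleton, Option.some_or,
      Option.some.injEq] at hX
    simp only [List.cons_append, List.head?_cons, Option.some.injEq] at hY
    subst hX hY
    exact (hL (bs' ++ [b] ++ c :: cs) (by simp) ⟨bs', cs, by simp⟩).elim

lemma List.eq_of_prefix_of_flatten_map_eq {α β : Type*} {f : α → List β} (hf : ∀ x, f x ≠ [])
    {s t : List α} (hst : s <+: t) (h : (s.map f).flatten = (t.map f).flatten) : s = t := by
  obtain ⟨w, rfl⟩ := hst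
  rcases w with _ | ⟨x, w⟩
  · simp
  · simp [hf x] at h

lemma Set.Finite.setOf_length_le_forall_mem {β : Type*} {E : Set β} (hE : E.Finite) (n : ℕ) :
    {l : List β | l.length ≤ n ∧ ∀ x ∈ l, x ∈ E}.Finite := by
  have := hE.to_subtype
  refine ((List.finite_length_le E n).image (List.map (↑))).subset ?_
  rintro l ⟨hl, hlE⟩
  lift l to List E using hlE
  exact ⟨l, by simpa using hl, rfl⟩

lemma finsum_mem_mul_finsum_mem {α β R : Type*} [CommSemiring R] {s : Set α} {t : Set β}
    (hs : s.Finite) (ht : t.Finite) (f : α → R) (g : β → R) :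
    (∑ᶠ x ∈ s, f x) * ∑ᶠ y ∈ t, g y = ∑ᶠ p ∈ s ×ˢ t, f p.1 * g p.2 := by
  rw [← hs.coe_toFinset, ← ht.coe_toFinset, ← Finset.coe_product, finsum_mem_coe_finset,
    finsum_mem_coe_finset, finsum_mem_coe_finset, Finset.sum_product, Finset.sum_mul_sum]

lemma AN_lt_AN_succ {a : ℕ} (ha : 2 ≤ a) (n : ℕ) : AN a n < AN a (n + 1) := by
  induction n with
  | zero => simp [AN]
  | succ n ih =>
    have : 2 * AN a (n + 1) ≤ a * AN a (n + 1) := Nat.mul_le_mul_right _ ha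
    show AN a (n + 1) < a * AN a (n + 1) + 1 - AN a n
    omega

lemma lt_length_block {a : ℕ} (ha : 2 ≤ a) (x : ℕ × Bool) : x.1 < (block a x).length := by
  have := (strictMono_nat_of_lt_succ (AN_lt_AN_succ ha)).id_le (x.1 + 1)
  obtain ⟨i, _ | _⟩ := x <;> simp_all [block, L] <;> omega

lemma block_ne_nil {a : ℕ} (ha : 2 ≤ a) (x : ℕ × Bool) : block a x ≠ [] :=
  List.ne_nil_of_length_pos (Nat.zero_lt_of_lt (lt_length_block ha x))

lemma not_infix_L (u v : ℕ) : ¬ [true, false] <:+: L u v := by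
  intro h
  have hsorted : (L u v).Pairwise (· ≤ ·) := by
    simp only [L, List.pairwise_append, List.pairwise_replicate]
    aesop
  exact absurd (List.pairwise_pair.mp (hsorted.sublist h.sublist)) (by decide)

lemma not_infix_block (a : ℕ) (x : ℕ × Bool) : ¬ [true, false] <:+: block a x := by
  obtain ⟨i, _ | _⟩ := x <;> exact not_infix_L _ _

lemma SDyck_finite {a : ℕ} (ha : 2 ≤ a) (D : List Bool) : (SDyck a D).Finite := by
  refine ((Set.finite_Iic D.length).prod Set.finite_univ
    |>.setOf_length_le_forall_mem D.length).subset ?_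
  intro s (hs : (s.map (block a)).flatten = D)
  subst hs
  refine ⟨?_, fun x hx => ?_⟩
  · have := List.length_le_sum_of_one_le ((s.map (block a)).map List.length) <| by
      simp only [List.map_map, List.mem_map, Function.comp_apply]
      rintro _ ⟨x, -, rfl⟩
      exact Nat.one_le_of_lt (lt_length_block ha x)
    simpa [List.length_flatten] using this
  · have := (List.sublist_flatten_of_mem (List.mem_map_of_mem (f := block a) hx)).length_le
    simpa using ((lt_length_block ha x).trans_le this).le

lemma SDyck_append (a : ℕ) {D₁ D₂ : List Bool}
    (hend : D₁.getLast? = some true) (hhead : D₂.head? = some false) :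
    SDyck a (D₁ ++ D₂) = (fun p => p.1 ++ p.2) '' (SDyck a D₁ ×ˢ SDyck a D₂) := by
  ext s
  constructor
  · intro (hs : (s.map (block a)).flatten = D₁ ++ D₂)
    obtain ⟨L₁, L₂, hL, rfl, rfl⟩ := List.exists_flatten_eq_of_flatten_eq_append hend hhead
      (fun w hw => by obtain ⟨x, -, rfl⟩ := List.mem_map.mp hw; exact not_infix_block a x) hs
    obtain ⟨s₁, s₂, rfl, rfl, rfl⟩ := List.map_eq_append_iff.mp hL
    exact ⟨(s₁, s₂), ⟨rfl, rfl⟩, rfl⟩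
  · rintro ⟨⟨s₁, s₂⟩, ⟨hs₁, hs₂⟩, rfl⟩
    simp_all [SDyck]

lemma injOn_append_SDyck {a : ℕ} (ha : 2 ≤ a) (D₁ D₂ : List Bool) :
    (SDyck a D₁ ×ˢ SDyck a D₂).InjOn (fun p => p.1 ++ p.2) := by
  rintro ⟨s₁, s₂⟩ ⟨hs₁, -⟩ ⟨t₁, t₂⟩ ⟨ht₁, -⟩ (h : s₁ ++ s₂ = t₁ ++ t₂)
  have hflat : (s₁.map (block a)).flatten = (t₁.map (block a)).flatten := hs₁.trans ht₁.symm
  have h₁ : s₁ = t₁ := by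
    rcases List.prefix_or_prefix_of_prefix (List.prefix_append s₁ s₂)
      (h ▸ List.prefix_append t₁ t₂) with hp | hp
    · exact List.eq_of_prefix_of_flatten_map_eq (block_ne_nil ha) hp hflat
    · exact (List.eq_of_prefix_of_flatten_map_eq (block_ne_nil ha) hp hflat.symm).symm
  subst h₁
  rw [List.append_cancel_left h]

lemma sgnC_append (s t : List (ℕ × Bool)) : sgnC (s ++ t) = sgnC s * sgnC t := by
  simp [sgnC, List.filter_append, pow_add]

theorem stmt10_general (a : ℕ) (ha : 3 ≤ a) (D₁ D₂ : List Bool)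
    (hend : D₁.getLast? = some true) (hhead : D₂.head? = some false) :
    cMult a (D₁ ++ D₂) = cMult a D₁ * cMult a D₂ := by
  have ha₂ : 2 ≤ a := by omega
  calc cMult a (D₁ ++ D₂)
      = ∑ᶠ p ∈ SDyck a D₁ ×ˢ SDyck a D₂, sgnC (p.1 ++ p.2) := by
        rw [cMult, SDyck_append a hend hhead, finsum_mem_image (injOn_append_SDyck ha₂ D₁ D₂)]
    _ = cMult a D₁ * cMult a D₂ := by
        simp only [sgnC_append]
        exact (finsum_mem_mul_finsum_mem (SDyck_finite ha₂ D₁) (SDyck_finite ha₂ D₂) _ _).symm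

/-- If a Dyck path `D` is the concatenation of Dyck paths `D₁`, `D₂` at a 21-corner
(`D₁` ends with a north step, `D₂` begins with an east step), then
`c(D) = c(D₁) * c(D₂)`. -/
theorem stmt10 (a : ℕ) (ha : 3 ≤ a) (D₁ D₂ : List Bool)
    (h₁ : IsDyckWord D₁) (h₂ : IsDyckWord D₂)
    (hend : D₁.getLast? = some true) (hhead : D₂.head? = some false) :
    cMult a (D₁ ++ D₂) = cMult a D₁ * cMult a D₂ :=
  stmt10_general a ha D₁ D₂ hend hhead
end
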